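/- Fix integers Na, No ≥ 1, unit vectors p̂₁, …, p̂_{Na} ∈ ℝ^{No}, a symmetric matrix A_a ∈ ℝ^{Na×Na} with zero diagonal, parameters d, α, γ, u ∈ ℝ, bias vectors b₁, …, b_{Na} ∈ ℝ^{No}, and a function S : ℝ → ℝ. Suppose y : ℝ → ℝ^{Na} is differentiable and define Zᵢ(t) = yᵢ(t) p̂ᵢ ∈ ℝ^{No}. If for every i and every t the curve Z satisfies the constrained nonlinear opinion dynamics Żᵢ(t) = Pᵢ Fᵢ(Z(t)), where Pᵢ = p̂ᵢ p̂ᵢᵀ and Fᵢⱼ(Z) = −d zᵢⱼ + S(u(α zᵢⱼ + γ Σ_{k≠i} (A_a)ᵢₖ zₖⱼ)) + bᵢⱼ, then each effective opinion yᵢ(t) = p̂ᵢ · Zᵢ(t) satisfies the reduced ordinary differential equation ẏᵢ = −d yᵢ + p̂ᵢ · S(u(α yᵢ p̂ᵢ + γ Σ_{k≠i} (A_a)ᵢₖ yₖ p̂ₖ)) + b_{ei}, where S is applied componentwise to vectors and b_{ei} = p̂ᵢ · bᵢ. -/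

import Mathlib

open Matrix

/-- **Proposition 2 (Reduced Dynamics).**
With rank-one projection constraints `Pᵢ = p̂ᵢ p̂ᵢᵀ` (unit vectors in the
Euclidean norm: `p̂ᵢ ⬝ᵥ p̂ᵢ = 1`), suppose `y : ℝ → ℝ^{Na}` is differentiable,
set `Zᵢ(t) = yᵢ(t) • p̂ᵢ`, and suppose `Z` solves the projection-constrained
nonlinear opinion dynamics `Żᵢ = Pᵢ Fᵢ(Z)` with
`Fᵢⱼ(Z) = −d zᵢⱼ + S(u(α zᵢⱼ + γ Σ_{k≠i} (A_a)ᵢₖ zₖⱼ)) + bᵢⱼ`.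
Then each effective opinion `yᵢ = p̂ᵢ ⬝ᵥ Zᵢ` satisfies the reduced ODE
`ẏᵢ = −d yᵢ + p̂ᵢ ⬝ᵥ S(u(α yᵢ p̂ᵢ + γ Σ_{k≠i} (A_a)ᵢₖ yₖ p̂ₖ)) + b_{ei}`,
with `S` applied componentwise and `b_{ei} = p̂ᵢ ⬝ᵥ bᵢ`. -/
theorem reduced_dynamics
    (Na No : ℕ) (hNa : 1 ≤ Na) (hNo : 1 ≤ No)
    (phat : Fin Na → (Fin No → ℝ))
    (hunit : ∀ i, phat i ⬝ᵥ phat i = 1)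
    (Aa : Matrix (Fin Na) (Fin Na) ℝ) (hsym : Aa.IsSymm) (hdiag : ∀ i, Aa i i = 0)
    (d α γ u : ℝ)
    (b : Fin Na → (Fin No → ℝ))
    (S : ℝ → ℝ)
    (y : ℝ → Fin Na → ℝ)
    (hdiff : ∀ i, Differentiable ℝ (fun t => y t i))
    (Z : ℝ → Fin Na → (Fin No → ℝ))
    (hZ : ∀ t i, Z t i = y t i • phat i)
    (F : ℝ → Fin Na → (Fin No → ℝ))
    (hF : ∀ t i j, F t i j =
      -d * Z t i j
        + S (u * (α * Z t i j + γ * ∑ k ∈ Finset.univ.erase i, Aa i k * Z t k j))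
        + b i j)
    (hflow : ∀ i t, HasDerivAt (fun s => Z s i) ((phat i ⬝ᵥ F t i) • phat i) t) :
    ∀ i t, HasDerivAt (fun s => y s i)
      (-d * y t i
        + phat i ⬝ᵥ (fun j => S (u * (α * y t i * phat i j
            + γ * ∑ k ∈ Finset.univ.erase i, Aa i k * y t k * phat k j)))
        + phat i ⬝ᵥ b i) t := by

  intro i t
  set c : ℝ := phat i ⬝ᵥ F t i with hc
  -- derivative of each component
  have hpi : ∀ j, HasDerivAt (fun s => Z s i j) ((c • phat i) j) t := by
    intro j
    exact (hasDerivAt_pi.mp (hflow i t)) j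
  -- y s i = phat i ⬝ᵥ Z s i
  have hy : ∀ s, y s i = ∑ j, phat i j * Z s i j := by
    intro s
    have : phat i ⬝ᵥ Z s i = y s i := by
      rw [hZ, dotProduct_smul, hunit i]; simp
    simpa [dotProduct] using this.symm
  have hsum : HasDerivAt (fun s => ∑ j, phat i j * Z s i j)
      (∑ j, phat i j * (c • phat i) j) t :=
    HasDerivAt.fun_sum fun j _ => (hpi j).const_mul (phat i j)
  have hval : (∑ j, phat i j * (c • phat i) j) = c := by
    have : (∑ j, phat i j * (c • phat i) j) = c * (phat i ⬝ᵥ phat i) := by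
      simp [dotProduct, Finset.mul_sum]; ring_nf
      exact Finset.sum_congr rfl fun j _ => by ring
    rw [this, hunit i, mul_one]
  have hmain : HasDerivAt (fun s => y s i) c t := by
    have := hsum.congr_deriv hval
    exact this.congr_of_eventuallyEq (Filter.Eventually.of_forall fun s => (hy s))
  have hcval : c = -d * y t i
      + phat i ⬝ᵥ (fun j => S (u * (α * y t i * phat i j
          + γ * ∑ k ∈ Finset.univ.erase i, Aa i k * y t k * phat k j)))
      + phat i ⬝ᵥ b i := by
    rw [hc]
    have hFe : ∀ j, F t i j = -d * (y t i * phat i j)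
        + S (u * (α * y t i * phat i j
          + γ * ∑ k ∈ Finset.univ.erase i, Aa i k * y t k * phat k j))
        + b i j := by
      intro j
      rw [hF t i j]
      have h1 : Z t i j = y t i * phat i j := by rw [hZ]; simp [Pi.smul_apply]
      have h2 : ∀ k, Z t k j = y t k * phat k j := fun k => by rw [hZ]; simp
      simp only [h1, h2]
      have : ∀ k, Aa i k * (y t k * phat k j) = Aa i k * y t k * phat k j :=
        fun k => by ring
      simp only [this]
      ring_nf
    simp only [dotProduct, hFe]
    simp only [mul_add, Finset.sum_add_distrib]
    congr 1
    congr 1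
    have : (∑ x, phat i x * (-d * (y t i * phat i x)))
        = (-d * y t i) * (phat i ⬝ᵥ phat i) := by
      simp only [dotProduct, Finset.mul_sum]
      exact Finset.sum_congr rfl fun j _ => by ring
    rw [this, hunit i, mul_one]
  rw [← hcval]
  exact hmain
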